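/- Let 𝒮 be a separated scheme of finite type over ℤ and let n, d, r be positive integers. There exist a constant m, depending only on n, d, r (and 𝒮), and points s₁, …, s_m ∈ 𝒮 such that: (1) the residue fields κ(s₁), …, κ(s_m) are finite of characteristic prime to n; (2) if k is a number field of degree at most d, U ⊂ Spec O_k is an open subscheme with at most r places at infinity, and U → 𝒮 is a U-point of 𝒮, then there exist indices 1 ≤ i < j ≤ m such that the residue characteristics of κ(s_i) and κ(s_j) are distinct and the fibers of U → 𝒮 above s_i and above s_j are nonempty. -/

import Mathlib

/-!
Fix `r + 2` distinct primes `ℓₜ > n` and take as test points the points of `𝒮` whose residue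
field embeds into `𝔽_{ℓₜ ^ d!}` for some `t`. On an affine open `Spec A`, with `A` finitely
generated over `ℤ`, such a point is the kernel of one of the finitely many ring maps
`A → 𝔽_{ℓₜ ^ d!}`, so a finite affine cover leaves finitely many test points.
If `[k : ℚ] ≤ d`, every `ℓₜ` has a prime of `O_k` above it with residue field `𝔽_{ℓₜ ^ f}`,
`f ≤ d`, which embeds into `𝔽_{ℓₜ ^ d!}` because `f ∣ d!`. These `r + 2` primes are distinct
and at most `r` of them lie outside `U`, so two lie in `U`; residue fields only grow along
`u`, so their images are test points of distinct residue characteristics.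
-/

open AlgebraicGeometry CategoryTheory Limits

noncomputable section

/-- `Spec` of a commutative ring, as a scheme. -/
abbrev specOf (R : Type) [CommRing R] : Scheme := Spec (CommRingCat.of R)

theorem finite_ringHom_of_finiteType (A F : Type*) [CommRing A] [Algebra.FiniteType ℤ A]
    [Ring F] [Finite F] : Finite (A →+* F) := by
  obtain ⟨S, hS⟩ := Algebra.FiniteType.out (R := ℤ) (A := A)
  refine Finite.of_injective (fun f : A →+* F => fun a : S => f a) fun f g hfg => ?_
  apply RingHom.toIntAlgHom_injective
  exact AlgHom.ext_of_adjoin_eq_top hS fun a ha => congrFun hfg ⟨a, ha⟩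

theorem PrimeSpectrum.finite_setOf_nonempty_residueField_ringHom (A F : Type*) [CommRing A]
    [Algebra.FiniteType ℤ A] [Ring F] [Nontrivial F] [Finite F] :
    {p : PrimeSpectrum A | Nonempty (p.asIdeal.ResidueField →+* F)}.Finite := by
  have := finite_ringHom_of_finiteType A F
  refine ((Set.finite_range fun f : A →+* F => RingHom.ker f).preimage
    (fun p _ q _ h => PrimeSpectrum.ext h)).subset ?_
  rintro p ⟨φ⟩
  refine ⟨φ.comp (algebraMap A _), ?_⟩
  exact (RingHom.ker_comp_of_injective _ φ.injective).trans p.asIdeal.ker_algebraMap_residueField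

theorem nonempty_ringHom_congr_left {A B F : Type*} [NonAssocSemiring A] [NonAssocSemiring B]
    [NonAssocSemiring F] (e : A ≃+* B) : Nonempty (A →+* F) ↔ Nonempty (B →+* F) :=
  ⟨fun ⟨φ⟩ => ⟨φ.comp e.symm.toRingHom⟩, fun ⟨φ⟩ => ⟨φ.comp e.toRingHom⟩⟩

theorem finite_and_ringChar_eq_of_ringHom {K L : Type*} [Field K] [Ring L] [Nontrivial L]
    [Finite L] {ℓ : ℕ} [CharP L ℓ] (φ : K →+* L) : Finite K ∧ ringChar K = ℓ :=
  ⟨Finite.of_injective φ φ.injective, ringChar.eq_iff.mpr ((φ.charP_iff_charP ℓ).mpr ‹_›)⟩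

theorem FiniteField.nonempty_ringHom_galoisField {K : Type*} [Field K] [Finite K] {ℓ f e : ℕ}
    [Fact ℓ.Prime] (hK : Nat.card K = ℓ ^ f) (hfe : f ∣ e) (he : e ≠ 0) :
    Nonempty (K →+* GaloisField ℓ e) := by
  have := Fintype.ofFinite K
  have : CharP K ℓ := charP_of_card_eq_prime_pow (by rwa [← Nat.card_eq_fintype_card])
  let := ZMod.algebra K ℓ
  have hf : Module.finrank (ZMod ℓ) K = f := by
    apply Nat.pow_right_injective (Fact.out : ℓ.Prime).two_le
    show ℓ ^ _ = ℓ ^ f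
    rw [FiniteField.pow_finrank_eq_natCard, hK]
  obtain ⟨φ⟩ := FiniteField.nonempty_algHom_of_finrank_dvd (F := ZMod ℓ) (K := K)
    (L := GaloisField ℓ e) (by rwa [hf, GaloisField.finrank ℓ he])
  exact ⟨φ.toRingHom⟩

theorem Ideal.exists_isMaximal_natCard_quotient_eq_pow {S : Type*} [CommRing S]
    [IsDedekindDomain S] [Module.Free ℤ S] [Module.Finite ℤ S]
    (hS : 0 < Module.finrank ℤ S) {ℓ : ℕ} (hℓ : ℓ.Prime) :
    ∃ P : Ideal S, P.IsMaximal ∧ ∃ f, 0 < f ∧ f ≤ Module.finrank ℤ S ∧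
      Nat.card (S ⧸ P) = ℓ ^ f := by
  have hℓS : (span {(ℓ : S)}).absNorm = ℓ ^ Module.finrank ℤ S := absNorm_span_natCast ℓ
  have hne : span {(ℓ : S)} ≠ ⊤ := fun h => by
    rw [h, absNorm_top] at hℓS
    exact (Nat.one_lt_pow hS.ne' hℓ.one_lt).ne hℓS
  obtain ⟨P, hP, hℓP⟩ := exists_le_maximal _ hne
  obtain ⟨f, hfS, hPf⟩ := (Nat.dvd_prime_pow hℓ).mp (hℓS ▸ absNorm_dvd_absNorm_of_le hℓP)
  refine ⟨P, hP, f, Nat.pos_of_ne_zero fun hf => hP.ne_top ?_, hfS, ?_⟩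
  · rwa [hf, pow_zero, absNorm_eq_one_iff] at hPf
  · rwa [absNorm_apply, Submodule.cardQuot_apply] at hPf

theorem Nat.exists_injective_prime_gt (n N : ℕ) :
    ∃ ℓ : Fin N → ℕ, Function.Injective ℓ ∧ ∀ t, (ℓ t).Prime ∧ n < ℓ t :=
  ⟨fun t => Nat.nth Nat.Prime (n + t),
    (Nat.nth_strictMono Nat.infinite_setOfPred_prime).injective.comp
      fun _ _ h => Fin.ext (Nat.add_left_cancel h),
    fun t => ⟨Nat.prime_nth_prime _, lt_of_lt_of_le (by omega) (Nat.add_two_le_nth_prime (n + t))⟩⟩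

theorem exists_ne_of_injective_of_natCard_compl_le {ι X : Type*} [Finite ι] {f : ι → X}
    (hf : Function.Injective f) {U : Set X} (hU : Uᶜ.Finite)
    (hcard : Nat.card ↥Uᶜ + 2 ≤ Nat.card ι) : ∃ a b, a ≠ b ∧ f a ∈ U ∧ f b ∈ U := by
  have hout : (f ⁻¹' Uᶜ).ncard ≤ Uᶜ.ncard :=
    Set.ncard_le_ncard_of_injOn f (fun _ h => h) hf.injOn hU
  have hsplit := Set.ncard_add_ncard_compl (f ⁻¹' U)
  rw [← Set.preimage_compl] at hsplit
  rw [Nat.card_coe_set_eq] at hcard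
  obtain ⟨a, b, ha, hb, hab⟩ := (Set.one_lt_ncard_iff (s := f ⁻¹' U) (Set.toFinite _)).mp
    (by omega)
  exact ⟨a, b, hab, ha, hb⟩

theorem exists_lt_of_mem_range_of_ne {ι X β : Type*} [LinearOrder ι] (s : ι → X) (g : X → β)
    {P : X → Prop} {x y : X} (hx : x ∈ Set.range s) (hy : y ∈ Set.range s) (hxy : g x ≠ g y)
    (hPx : P x) (hPy : P y) : ∃ i j, i < j ∧ g (s i) ≠ g (s j) ∧ P (s i) ∧ P (s j) := by
  obtain ⟨i, rfl⟩ := hx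
  obtain ⟨j, rfl⟩ := hy
  rcases lt_trichotomy i j with h | rfl | h
  · exact ⟨i, j, h, hxy, hPx, hPy⟩
  · exact absurd rfl hxy
  · exact ⟨j, i, h, hxy.symm, hPy, hPx⟩

namespace AlgebraicGeometry

theorem Scheme.Hom.nonempty_residueField_ringHom_iff {X Y : Scheme} (f : X ⟶ Y)
    [IsOpenImmersion f] (x : X) (F : Type*) [Ring F] :
    Nonempty (Y.residueField (f.base x) →+* F) ↔ Nonempty (X.residueField x →+* F) :=
  nonempty_ringHom_congr_left (asIso (f.residueFieldMap x)).commRingCatIsoToRingEquiv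

theorem Spec.nonempty_residueField_ringHom_iff (R : CommRingCat) (x : PrimeSpectrum R)
    (F : Type*) [Ring F] :
    Nonempty ((Spec R).residueField x →+* F) ↔ Nonempty (x.asIdeal.ResidueField →+* F) :=
  nonempty_ringHom_congr_left (Scheme.Spec.residueFieldIso R x).commRingCatIsoToRingEquiv

theorem algebraFiniteType_of_locallyOfFiniteType (A : CommRingCat)
    [h : LocallyOfFiniteType (specZIsTerminal.from (Spec A))] : Algebra.FiniteType ℤ A := by
  have : specZIsTerminal.from (Spec A) = Spec.map (CommRingCat.ofHom (Int.castRingHom A)) :=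
    specZIsTerminal.hom_ext _ _
  rw [this, HasRingHomProperty.Spec_iff (P := @LocallyOfFiniteType), RingHom.FiniteType] at h
  convert h
  · rfl
  · exact Subsingleton.elim _ _

theorem Spec.finite_setOf_nonempty_residueField_ringHom (A : CommRingCat)
    [Algebra.FiniteType ℤ A] (F : Type*) [Ring F] [Nontrivial F] [Finite F] :
    {x : Spec A | Nonempty ((Spec A).residueField x →+* F)}.Finite :=
  (PrimeSpectrum.finite_setOf_nonempty_residueField_ringHom A F).subset fun x hx =>
    (Spec.nonempty_residueField_ringHom_iff A x F).mp hx

theorem Scheme.finite_setOf_nonempty_residueField_ringHom (X : Scheme) [CompactSpace X]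
    [LocallyOfFiniteType (specZIsTerminal.from X)] (F : Type*) [Ring F] [Nontrivial F]
    [Finite F] : {x : X | Nonempty (X.residueField x →+* F)}.Finite := by
  let 𝒰 := X.affineCover.finiteSubcover
  have : Finite 𝒰.I₀ := by dsimp [𝒰]; infer_instance
  let g (i : 𝒰.I₀) : Spec Γ(𝒰.X i, ⊤) ⟶ X := (𝒰.X i).isoSpec.inv ≫ 𝒰.f i
  have (i : 𝒰.I₀) : Algebra.FiniteType ℤ Γ(𝒰.X i, ⊤) := by
    have : LocallyOfFiniteType (specZIsTerminal.from (Spec Γ(𝒰.X i, ⊤))) := by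
      rw [specZIsTerminal.hom_ext (specZIsTerminal.from _) (g i ≫ specZIsTerminal.from X)]
      infer_instance
    exact algebraFiniteType_of_locallyOfFiniteType _
  refine (Set.finite_iUnion fun i => (Spec.finite_setOf_nonempty_residueField_ringHom
    Γ(𝒰.X i, ⊤) F).image (g i).base).subset ?_
  rintro x hx
  obtain ⟨i, y, rfl⟩ := 𝒰.exists_eq x
  have hy : (g i).base ((𝒰.X i).isoSpec.hom.base y) = (𝒰.f i).base y := by simp [g]
  exact Set.mem_iUnion.mpr ⟨i, _, ((g i).nonempty_residueField_ringHom_iff _ F).mp (hy ▸ hx), hy⟩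

section testPoints

variable {ι : Type*} (ℓ : ι → ℕ) [∀ t, Fact (ℓ t).Prime] (e : ℕ)

def testPoints (X : Scheme) : Set X :=
  ⋃ t, {x | Nonempty (X.residueField x →+* GaloisField (ℓ t) e)}

theorem finite_testPoints (X : Scheme) [CompactSpace X]
    [LocallyOfFiniteType (specZIsTerminal.from X)] [Finite ι] : (testPoints ℓ e X).Finite :=
  Set.finite_iUnion fun _ => X.finite_setOf_nonempty_residueField_ringHom _

variable {ℓ e} {X : Scheme}

theorem exists_of_mem_testPoints {x : X} (hx : x ∈ testPoints ℓ e X) :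
    ∃ t, Finite (X.residueField x) ∧ ringChar (X.residueField x) = ℓ t :=
  let ⟨t, ⟨φ⟩⟩ := Set.mem_iUnion.mp hx
  ⟨t, finite_and_ringChar_eq_of_ringHom φ⟩

theorem Scheme.Hom.mem_testPoints_of_nonempty_residueField_ringHom {Y : Scheme} (f : Y ⟶ X)
    {y : Y} {t : ι} (hy : Nonempty (Y.residueField y →+* GaloisField (ℓ t) e)) :
    f.base y ∈ testPoints ℓ e X ∧ ringChar (X.residueField (f.base y)) = ℓ t :=
  let ⟨φ⟩ := hy
  ⟨Set.mem_iUnion.mpr ⟨t, ⟨φ.comp (f.residueFieldMap y).hom⟩⟩,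
    (finite_and_ringChar_eq_of_ringHom (φ.comp (f.residueFieldMap y).hom)).2⟩

end testPoints

end AlgebraicGeometry

open NumberField in
theorem NumberField.exists_nonempty_residueField_ringHom_galoisField (k : Type) [Field k]
    [NumberField k] {d : ℕ} (hk : Module.finrank ℚ k ≤ d) (ℓ : ℕ) [Fact ℓ.Prime] :
    ∃ x : specOf (𝓞 k), Nonempty ((specOf (𝓞 k)).residueField x →+* GaloisField ℓ d.factorial) := by
  obtain ⟨P, hP, f, hf, hfk, hcard⟩ := Ideal.exists_isMaximal_natCard_quotient_eq_pow (S := 𝓞 k)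
    (by rw [RingOfIntegers.rank]; exact Module.finrank_pos) (Fact.out : ℓ.Prime)
  rw [RingOfIntegers.rank] at hfk
  have hκ : Nat.card P.ResidueField = ℓ ^ f := (Nat.card_congr
    (Equiv.ofBijective _ P.bijective_algebraMap_quotient_residueField)).symm.trans hcard
  have : Finite P.ResidueField := Nat.finite_of_card_ne_zero (hκ ▸ pow_ne_zero _ (NeZero.ne ℓ))
  exact ⟨⟨P, hP.isPrime⟩, (Spec.nonempty_residueField_ringHom_iff _ _ _).mpr
    (FiniteField.nonempty_ringHom_galoisField hκ (Nat.dvd_factorial hf (hfk.trans hk))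
      (Nat.factorial_ne_zero d))⟩

theorem exists_test_points_general
    -- `𝒮` : a separated scheme of finite type over `ℤ`
    (𝒮 : Scheme)
    (hlft : LocallyOfFiniteType (specZIsTerminal.from 𝒮))
    (hqc : QuasiCompact (specZIsTerminal.from 𝒮))
    -- the integers `n, d, r > 0`
    (n d r : ℕ) (hn : 0 < n) :
    ∃ (m : ℕ) (s : Fin m → 𝒮),
      -- (1) finite residue fields of characteristic prime to `n`
      (∀ i : Fin m,
        Finite (𝒮.residueField (s i)) ∧ (ringChar (𝒮.residueField (s i))).Coprime n) ∧
      -- (2) for every `U`-point of `𝒮` with `U` of bounded ramification data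
      (∀ (k : Type) (_ : Field k) (_ : NumberField k),
        Module.finrank ℚ k ≤ d →
        ∀ U : (specOf (NumberField.RingOfIntegers k)).Opens,
          -- `U` has at most `r` places at infinity
          {p : specOf (NumberField.RingOfIntegers k) | p ∉ U}.Finite →
          Nat.card {p : specOf (NumberField.RingOfIntegers k) // p ∉ U} ≤ r →
          ∀ u : U.toScheme ⟶ 𝒮,
            ∃ i j : Fin m, i < j ∧
              ringChar (𝒮.residueField (s i)) ≠ ringChar (𝒮.residueField (s j)) ∧
              (∃ x : U.toScheme, u.base x = s i) ∧
              (∃ y : U.toScheme, u.base y = s j)) := by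
  have : CompactSpace 𝒮 := QuasiCompact.compactSpace_of_compactSpace (specZIsTerminal.from 𝒮)
  obtain ⟨ℓ, hℓ_inj, hℓ⟩ := Nat.exists_injective_prime_gt n (r + 2)
  have (t : Fin (r + 2)) : Fact (ℓ t).Prime := ⟨(hℓ t).1⟩
  obtain ⟨m, s, -, hs⟩ := (finite_testPoints ℓ d.factorial 𝒮).fin_param
  refine ⟨m, s, fun i => ?_, fun k _ _ hk U hU_fin hU_card u => ?_⟩
  · obtain ⟨t, hfin, hchar⟩ := exists_of_mem_testPoints (hs.le (Set.mem_range_self i))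
    exact ⟨hfin, hchar ▸ Nat.coprime_of_lt_prime hn.ne' (hℓ t).2 (hℓ t).1⟩
  choose p hp using fun t => NumberField.exists_nonempty_residueField_ringHom_galoisField k hk (ℓ t)
  have hp_char (t) : ringChar ((specOf (NumberField.RingOfIntegers k)).residueField (p t)) = ℓ t :=
    (finite_and_ringChar_eq_of_ringHom (hp t).some).2
  have hp_inj : Function.Injective p := fun a b h => hℓ_inj (by rw [← hp_char a, h, hp_char b])
  obtain ⟨a, b, hab, ha, hb⟩ := exists_ne_of_injective_of_natCard_compl_le hp_inj hU_fin
    (by rw [Nat.card_fin]; exact Nat.add_le_add_right hU_card 2)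
  have himage (t) (ht : p t ∈ U) := u.mem_testPoints_of_nonempty_residueField_ringHom
    ((U.ι.nonempty_residueField_ringHom_iff ⟨p t, ht⟩ _).mp (hp t))
  exact exists_lt_of_mem_range_of_ne s (fun x => ringChar (𝒮.residueField x))
    (P := fun x => ∃ y : U.toScheme, u.base y = x) (hs.ge (himage a ha).1) (hs.ge (himage b hb).1)
    (by simp only [(himage a ha).2, (himage b hb).2]; exact hℓ_inj.ne hab) ⟨_, rfl⟩ ⟨_, rfl⟩

theorem exists_test_points
    -- `𝒮` : a separated scheme of finite type over `ℤ`
    (𝒮 : Scheme)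
    (hsep : IsSeparated (specZIsTerminal.from 𝒮))
    (hlft : LocallyOfFiniteType (specZIsTerminal.from 𝒮))
    (hqc : QuasiCompact (specZIsTerminal.from 𝒮))
    -- the integers `n, d, r > 0`
    (n d r : ℕ) (hn : 0 < n) (hd : 0 < d) (hr : 0 < r) :
    ∃ (m : ℕ) (s : Fin m → 𝒮),
      -- (1) finite residue fields of characteristic prime to `n`
      (∀ i : Fin m,
        Finite (𝒮.residueField (s i)) ∧ (ringChar (𝒮.residueField (s i))).Coprime n) ∧
      -- (2) for every `U`-point of `𝒮` with `U` of bounded ramification data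
      (∀ (k : Type) (_ : Field k) (_ : NumberField k),
        Module.finrank ℚ k ≤ d →
        ∀ U : (specOf (NumberField.RingOfIntegers k)).Opens,
          -- `U` has at most `r` places at infinity
          {p : specOf (NumberField.RingOfIntegers k) | p ∉ U}.Finite →
          Nat.card {p : specOf (NumberField.RingOfIntegers k) // p ∉ U} ≤ r →
          ∀ u : U.toScheme ⟶ 𝒮,
            ∃ i j : Fin m, i < j ∧
              ringChar (𝒮.residueField (s i)) ≠ ringChar (𝒮.residueField (s j)) ∧
              (∃ x : U.toScheme, u.base x = s i) ∧
              (∃ y : U.toScheme, u.base y = s j)) :=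
  exists_test_points_general 𝒮 hlft hqc n d r hn
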